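/- Let a < b be reals, n ≥ 1 a natural number, h = (b−a)/(2n), k > 0, θ = k·h, and nodes x_r = a + r·h for r = 0,…,2n. Let ψ : ℝ → ℝ be any function, and let p : [a,b] → ℝ be the piecewise quadratic interpolant of ψ, i.e. on each double panel [x_{2r}, x_{2r+2}] (r = 0,…,n−1), p coincides with the unique polynomial of degree at most 2 that agrees with ψ at x_{2r}, x_{2r+1}, x_{2r+2}. Then Filon_sin(ψ) = ∫_a^b sin(k·x)·p(x) dx. -/

import Mathlib

open Real Finset

/-- Filon's sine quadrature formula on `[a,b]` with `2n` equal subintervals. -/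
noncomputable def filonSin (a b k : ℝ) (n : ℕ) (ψ : ℝ → ℝ) : ℝ :=
  let h : ℝ := (b - a) / (2 * n)
  let θ : ℝ := k * h
  let x : ℕ → ℝ := fun r => a + r * h
  let α : ℝ := 1 / θ + Real.sin θ * Real.cos θ / θ ^ 2 - 2 * Real.sin θ ^ 2 / θ ^ 3
  let β : ℝ := 2 * ((1 + Real.cos θ ^ 2) / θ ^ 2 - 2 * Real.sin θ * Real.cos θ / θ ^ 3)
  let γ : ℝ := 4 * (Real.sin θ / θ ^ 3 - Real.cos θ / θ ^ 2)
  let Seven : ℝ := (∑ r ∈ Finset.range (n + 1), ψ (x (2 * r)) * Real.sin (k * x (2 * r)))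
      - (ψ a * Real.sin (k * a) + ψ b * Real.sin (k * b)) / 2
  let Sodd : ℝ := ∑ r ∈ Finset.range n, ψ (x (2 * r + 1)) * Real.sin (k * x (2 * r + 1))
  h * (α * (ψ a * Real.cos (k * a) - ψ b * Real.cos (k * b)) + β * Seven + γ * Sodd)

/-- Filon's cosine quadrature formula on `[a,b]` with `2n` equal subintervals. -/
noncomputable def filonCos (a b k : ℝ) (n : ℕ) (ψ : ℝ → ℝ) : ℝ :=
  let h : ℝ := (b - a) / (2 * n)
  let θ : ℝ := k * h
  let x : ℕ → ℝ := fun r => a + r * h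
  let α : ℝ := 1 / θ + Real.sin θ * Real.cos θ / θ ^ 2 - 2 * Real.sin θ ^ 2 / θ ^ 3
  let β : ℝ := 2 * ((1 + Real.cos θ ^ 2) / θ ^ 2 - 2 * Real.sin θ * Real.cos θ / θ ^ 3)
  let γ : ℝ := 4 * (Real.sin θ / θ ^ 3 - Real.cos θ / θ ^ 2)
  let Ceven : ℝ := (∑ r ∈ Finset.range (n + 1), ψ (x (2 * r)) * Real.cos (k * x (2 * r)))
      - (ψ a * Real.cos (k * a) + ψ b * Real.cos (k * b)) / 2
  let Codd : ℝ := ∑ r ∈ Finset.range n, ψ (x (2 * r + 1)) * Real.cos (k * x (2 * r + 1))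
  h * (α * (ψ b * Real.sin (k * b) - ψ a * Real.sin (k * a)) + β * Ceven + γ * Codd)

/-!
On a double panel `[m - h, m + h]`, Filon's rule is the exact integral of `sin (k t)` times the
quadratic through the three nodes: integrating by parts twice gives an explicit primitive, and
evaluating it at `m ± h` with the addition formulas produces the weights `α`, `β`, `γ`. Summing
over the panels, the `α`-terms telescope to the endpoint terms and every interior even node is
counted twice in the `β`-terms, which is where `S_even` and its halved endpoints come from.
-/

open MeasureTheory

noncomputable def filonAlpha (θ : ℝ) : ℝ :=
  1 / θ + sin θ * cos θ / θ ^ 2 - 2 * sin θ ^ 2 / θ ^ 3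

noncomputable def filonBeta (θ : ℝ) : ℝ :=
  2 * ((1 + cos θ ^ 2) / θ ^ 2 - 2 * sin θ * cos θ / θ ^ 3)

noncomputable def filonGamma (θ : ℝ) : ℝ :=
  4 * (sin θ / θ ^ 3 - cos θ / θ ^ 2)

/-- Filon's sine rule on the single double panel with nodes `m - h`, `m`, `m + h`. -/
noncomputable def filonSinPanel (k h m : ℝ) (f : ℝ → ℝ) : ℝ :=
  h * (filonAlpha (k * h) * (f (m - h) * cos (k * (m - h)) - f (m + h) * cos (k * (m + h)))
    + filonBeta (k * h) * ((f (m - h) * sin (k * (m - h)) + f (m + h) * sin (k * (m + h))) / 2)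
    + filonGamma (k * h) * (f m * sin (k * m)))

theorem filonSinPanel_congr {k h m : ℝ} {f g : ℝ → ℝ} (hlo : f (m - h) = g (m - h))
    (hmid : f m = g m) (hhi : f (m + h) = g (m + h)) :
    filonSinPanel k h m f = filonSinPanel k h m g := by
  simp only [filonSinPanel, hlo, hmid, hhi]

theorem hasDerivAt_sin_mul_quadratic_primitive {k : ℝ} (hk : k ≠ 0) (c₀ c₁ c₂ t : ℝ) :
    HasDerivAt
      (fun t ↦ (2 * c₂ / k ^ 3 - (c₂ * t ^ 2 + c₁ * t + c₀) / k) * cos (k * t)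
        + (2 * c₂ * t + c₁) / k ^ 2 * sin (k * t))
      (sin (k * t) * (c₂ * t ^ 2 + c₁ * t + c₀)) t := by
  have hkt : HasDerivAt (fun t ↦ k * t) k t := by simpa using (hasDerivAt_id t).const_mul k
  have hq : HasDerivAt (fun t ↦ c₂ * t ^ 2 + c₁ * t + c₀) (2 * c₂ * t + c₁) t := by
    refine ((((hasDerivAt_pow 2 t).const_mul c₂).add
      ((hasDerivAt_id t).const_mul c₁)).add_const c₀).congr_deriv ?_
    ring
  have hq' : HasDerivAt (fun t ↦ 2 * c₂ * t + c₁) (2 * c₂) t := by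
    simpa using ((hasDerivAt_id t).const_mul (2 * c₂)).add_const c₁
  refine (((hq.div_const k).const_sub (2 * c₂ / k ^ 3)).mul hkt.cos
    |>.add ((hq'.div_const (k ^ 2)).mul hkt.sin)).congr_deriv ?_
  field_simp
  ring

theorem integral_sin_mul_quadratic_eq_filonSinPanel {k h : ℝ} (hk : k ≠ 0) (hh : h ≠ 0)
    (m c₀ c₁ c₂ : ℝ) :
    ∫ t in (m - h)..(m + h), sin (k * t) * (c₂ * t ^ 2 + c₁ * t + c₀) =
      filonSinPanel k h m (fun t ↦ c₂ * t ^ 2 + c₁ * t + c₀) := by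
  rw [intervalIntegral.integral_eq_sub_of_hasDerivAt
    (fun t _ ↦ hasDerivAt_sin_mul_quadratic_primitive hk c₀ c₁ c₂ t)
    (Continuous.intervalIntegrable (by fun_prop) _ _)]
  simp only [filonSinPanel, filonAlpha, filonBeta, filonGamma, mul_sub, mul_add,
    cos_add, sin_add, cos_sub, sin_sub]
  field_simp
  linear_combination 2 * sin (k * m) * (2 * sin (k * h) - k * h * cos (k * h)) *
    (c₂ * (m ^ 2 + h ^ 2) + c₁ * m + c₀) * sin_sq_add_cos_sq (k * h)

section QuadraticOnPanel

variable {k a b c₀ c₁ c₂ : ℝ} {p : ℝ → ℝ}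

theorem intervalIntegrable_sin_mul_of_eqOn_quadratic
    (hp : Set.EqOn p (fun t ↦ c₂ * t ^ 2 + c₁ * t + c₀) (Set.uIcc a b)) :
    IntervalIntegrable (fun t ↦ sin (k * t) * p t) volume a b := by
  refine ContinuousOn.intervalIntegrable (ContinuousOn.congr
    (f := fun t ↦ sin (k * t) * (c₂ * t ^ 2 + c₁ * t + c₀)) (by fun_prop) fun t ht ↦ ?_)
  simp only [hp ht]

theorem integral_sin_mul_eq_filonSinPanel_of_eqOn_quadratic {h m : ℝ} (hk : k ≠ 0) (hh : h ≠ 0)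
    {ψ : ℝ → ℝ} (hp : Set.EqOn p (fun t ↦ c₂ * t ^ 2 + c₁ * t + c₀) (Set.uIcc (m - h) (m + h)))
    (hlo : c₂ * (m - h) ^ 2 + c₁ * (m - h) + c₀ = ψ (m - h))
    (hmid : c₂ * m ^ 2 + c₁ * m + c₀ = ψ m)
    (hhi : c₂ * (m + h) ^ 2 + c₁ * (m + h) + c₀ = ψ (m + h)) :
    ∫ t in (m - h)..(m + h), sin (k * t) * p t = filonSinPanel k h m ψ := by
  rw [← filonSinPanel_congr (f := fun t ↦ c₂ * t ^ 2 + c₁ * t + c₀) hlo hmid hhi,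
    ← integral_sin_mul_quadratic_eq_filonSinPanel hk hh]
  exact intervalIntegral.integral_congr fun t ht ↦ by simp only [hp ht]

end QuadraticOnPanel

theorem Finset.sum_range_add_sum_range_succ {R : Type*} [CommRing R] (f : ℕ → R) (n : ℕ) :
    ∑ i ∈ range n, f i + ∑ i ∈ range n, f (i + 1) =
      2 * ∑ i ∈ range (n + 1), f i - (f 0 + f n) := by
  linear_combination -sum_range_succ f n - sum_range_succ' f n

section UniformNodes

variable {a h : ℝ} {x : ℕ → ℝ}

theorem sub_step_eq_of_uniform_nodes (hx : ∀ r : ℕ, x r = a + r * h) (r : ℕ) :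
    x (r + 1) - h = x r := by
  simp only [hx]; push_cast; ring

theorem add_step_eq_of_uniform_nodes (hx : ∀ r : ℕ, x r = a + r * h) (r : ℕ) :
    x (r + 1) + h = x (r + 2) := by
  simp only [hx]; push_cast; ring

theorem last_even_node_eq_of_uniform_nodes {b : ℝ} {n : ℕ} (hn : n ≠ 0)
    (hh : h = (b - a) / (2 * n)) (hx : ∀ r : ℕ, x r = a + r * h) : x (2 * n) = b := by
  rw [hx, hh]; push_cast; field_simp; ring

end UniformNodes

theorem filonSin_eq_sum_filonSinPanel {a b k h : ℝ} {n : ℕ} (hn : n ≠ 0)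
    (hh : h = (b - a) / (2 * n)) {x : ℕ → ℝ} (hx : ∀ r : ℕ, x r = a + r * h) (ψ : ℝ → ℝ) :
    filonSin a b k n ψ = ∑ r ∈ range n, filonSinPanel k h (x (2 * r + 1)) ψ := by
  simp only [filonSinPanel, sub_step_eq_of_uniform_nodes hx, add_step_eq_of_uniform_nodes hx,
    ← mul_add_one, ← mul_sum, sum_add_distrib, ← sum_div, sum_range_sub',
    sum_range_add_sum_range_succ, mul_zero, hx 0, Nat.cast_zero, zero_mul, add_zero,
    last_even_node_eq_of_uniform_nodes hn hh hx]
  simp only [filonSin, filonAlpha, filonBeta, filonGamma, ← hh, ← hx]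
  ring

theorem filonSin_eq_integral_of_piecewise_quadratic_interpolant
    (a b k : ℝ) (hab : a < b) (hk : 0 < k) (n : ℕ) (hn : 1 ≤ n)
    (h : ℝ) (hh : h = (b - a) / (2 * n))
    (x : ℕ → ℝ) (hx : ∀ r : ℕ, x r = a + r * h)
    (ψ p : ℝ → ℝ)
    (hp : ∀ r : ℕ, r < n → ∃ c0 c1 c2 : ℝ,
      (∀ t ∈ Set.Icc (x (2 * r)) (x (2 * r + 2)), p t = c2 * t ^ 2 + c1 * t + c0) ∧
      c2 * (x (2 * r)) ^ 2 + c1 * (x (2 * r)) + c0 = ψ (x (2 * r)) ∧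
      c2 * (x (2 * r + 1)) ^ 2 + c1 * (x (2 * r + 1)) + c0 = ψ (x (2 * r + 1)) ∧
      c2 * (x (2 * r + 2)) ^ 2 + c1 * (x (2 * r + 2)) + c0 = ψ (x (2 * r + 2))) :
    filonSin a b k n ψ = ∫ t in a..b, Real.sin (k * t) * p t := by
  have hh₀ : 0 < h := by
    have : (0 : ℝ) < n := by exact_mod_cast hn
    rw [hh]; exact div_pos (sub_pos.2 hab) (by positivity)
  have hpanel : ∀ r < n,
      IntervalIntegrable (fun t ↦ sin (k * t) * p t) volume (x (2 * r)) (x (2 * r + 2)) ∧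
      ∫ t in x (2 * r)..x (2 * r + 2), sin (k * t) * p t = filonSinPanel k h (x (2 * r + 1)) ψ := by
    intro r hr
    obtain ⟨c₀, c₁, c₂, hpq, hψlo, hψmid, hψhi⟩ := hp r hr
    simp only [← sub_step_eq_of_uniform_nodes hx (2 * r),
      ← add_step_eq_of_uniform_nodes hx (2 * r)] at hpq hψlo hψhi ⊢
    have hpq' : Set.EqOn p (fun t ↦ c₂ * t ^ 2 + c₁ * t + c₀)
        (Set.uIcc (x (2 * r + 1) - h) (x (2 * r + 1) + h)) := by
      rwa [Set.uIcc_of_le (by linarith)]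
    exact ⟨intervalIntegrable_sin_mul_of_eqOn_quadratic hpq',
      integral_sin_mul_eq_filonSinPanel_of_eqOn_quadratic hk.ne' hh₀.ne' hpq' hψlo hψmid hψhi⟩
  calc filonSin a b k n ψ
      = ∑ r ∈ range n, filonSinPanel k h (x (2 * r + 1)) ψ :=
        filonSin_eq_sum_filonSinPanel (by omega) hh hx ψ
    _ = ∑ r ∈ range n, ∫ t in x (2 * r)..x (2 * r + 2), sin (k * t) * p t :=
        sum_congr rfl fun r hr ↦ (hpanel r (mem_range.1 hr)).2.symm
    _ = ∫ t in x (2 * 0)..x (2 * n), sin (k * t) * p t :=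
        -- `x (2 * (r + 1))` and `x (2 * r + 2)` agree definitionally
        intervalIntegral.sum_integral_adjacent_intervals fun r hr ↦ (hpanel r hr).1
    _ = ∫ t in a..b, sin (k * t) * p t := by
        rw [last_even_node_eq_of_uniform_nodes (by omega) hh hx, mul_zero, hx 0, Nat.cast_zero,
          zero_mul, add_zero]
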